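/- arXiv:2207.03983 — 3 statements merged into one kernel-verified Lean document; each statement's English description precedes it below -/
import Mathlib

section
/- Fix constants α_1, α_2 > 0 with α_1 + α_2 = 1 and integers n > c ≥ 0 (c = number of coded servers). Define the coded capacity region for k = 2 as Λ_coded = {(λ_1, λ_2) ∈ ℝ²_{≥0} : min(c + r_1^+, (c + r_1^+ + r_2^+)/2) ≥ r_1^- + r_2^-, where r_i = α_i(n − c) − λ_i, r_i^+ = max(r_i, 0), r_i^- = max(−r_i, 0), and (r_1, r_2) relabeled so r_1 ≤ r_2}. Then the point (α_1 n − (1+α_1)c, α_2 n + α_1 c) belongs to Λ_coded but does not belong to the uncoded region [0, α_1 n] × [0, α_2 n], provided 0 < c and α_1 n − (1+α_1)c ≥ 0. -/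
/-- Expansion of the capacity region via coding (Theorem 3.2, `k = 2`): the point
`(α₁ n − (1+α₁)c, α₂ n + α₁ c)` satisfies the coded stability condition but lies
outside the uncoded rectangle `[0, α₁ n] × [0, α₂ n]`. -/
theorem coded_region_expansion (α₁ α₂ : ℝ) (n c : ℕ)
    (hα₁ : 0 < α₁) (hα₂ : 0 < α₂) (hsum : α₁ + α₂ = 1)
    (hnc : c < n) (hc : 0 < c)
    (hfeas : 0 ≤ α₁ * n - (1 + α₁) * c) :
    (let lam₁ : ℝ := α₁ * n - (1 + α₁) * c
     let lam₂ : ℝ := α₂ * n + α₁ * c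
     let r₁ : ℝ := α₁ * ((n : ℝ) - c) - lam₁
     let r₂ : ℝ := α₂ * ((n : ℝ) - c) - lam₂
     let a : ℝ := min r₁ r₂
     let b : ℝ := max r₁ r₂
     0 ≤ lam₁ ∧ 0 ≤ lam₂ ∧
     min ((c : ℝ) + max a 0) (((c : ℝ) + max a 0 + max b 0) / 2)
       ≥ max (-a) 0 + max (-b) 0) ∧
    ¬ (α₂ * n + α₁ * c ≤ α₂ * n) := by
  have hc' : (0 : ℝ) < c := by exact_mod_cast hc
  simp only
  have h1 : α₁ * ((n : ℝ) - c) - (α₁ * n - (1 + α₁) * c) = c := by ring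
  have h2 : α₂ * ((n : ℝ) - c) - (α₂ * n + α₁ * c) = -c := by
    have : α₂ = 1 - α₁ := by linarith
    rw [this]; ring
  rw [h1, h2]
  have hmin : min (c : ℝ) (-c) = -c := min_eq_right (by linarith)
  have hmax : max (c : ℝ) (-c) = c := max_eq_left (by linarith)
  rw [hmin, hmax]
  have h3 : max (-(c : ℝ)) 0 = 0 := max_eq_right (by linarith)
  have h4 : max (c : ℝ) 0 = c := max_eq_left (by linarith)
  have h5 : max (-(-(c : ℝ))) 0 = c := by rw [neg_neg, h4]
  rw [h3, h4, h5]
  refine ⟨⟨hfeas, by positivity, ?_⟩, by nlinarith⟩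
  have : min ((c:ℝ) + 0) (((c:ℝ) + 0 + c)/2) = c := by
    rw [add_zero]
    rw [min_eq_left]; linarith
  rw [this]; linarith
end

section
/- Let k = 2, α_1 = α_2 = 1/2, n > c ≥ 0 with c even. Then the coded capacity region boundary for λ_1 ∈ [α_1(n−c), α_1 n + (1/2 − α_1)c] = [(n−c)/2, n/2] satisfies: (λ_1, λ_2) is stable iff λ_2 ≤ (2n − c)/2 − λ_1. Equivalently, on this segment the region is bounded by the line λ_1 + λ_2 = n − c/2. -/
/-- Boundary of the two-type coded capacity region (Appendix B.2, case 3, `α₁ = α₂ = 1/2`):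
for `λ₁ ∈ [(n−c)/2, n/2]` and `λ₂ ≥ 0`, the coded stability condition
`min(c + a⁺, (c + a⁺ + b⁺)/2) ≥ a⁻ + b⁻` (with `rᵢ = (n−c)/2 − λᵢ` relabeled so
`a = min r₁ r₂ ≤ b = max r₁ r₂`) holds iff `λ₂ ≤ (2n − c)/2 − λ₁`. -/
theorem coded_boundary_symmetric (n c : ℕ) (hnc : c < n) (hc : 0 ≤ c) (hceven : Even c)
    (lam₁ lam₂ : ℝ) (h1l : ((n : ℝ) - c) / 2 ≤ lam₁) (h1u : lam₁ ≤ (n : ℝ) / 2)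
    (h2 : 0 ≤ lam₂) :
    (let r₁ : ℝ := ((n : ℝ) - c) / 2 - lam₁
     let r₂ : ℝ := ((n : ℝ) - c) / 2 - lam₂
     let a : ℝ := min r₁ r₂
     let b : ℝ := max r₁ r₂
     min ((c : ℝ) + max a 0) (((c : ℝ) + max a 0 + max b 0) / 2)
       ≥ max (-a) 0 + max (-b) 0)
    ↔ lam₂ ≤ (2 * (n : ℝ) - c) / 2 - lam₁ := by
  have hcn : (c:ℝ) < n := by exact_mod_cast hnc
  have hc0 : (0:ℝ) ≤ c := by positivity
  simp only
  set r₁ : ℝ := ((n : ℝ) - c) / 2 - lam₁ with hr1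
  set r₂ : ℝ := ((n : ℝ) - c) / 2 - lam₂ with hr2
  have h10 : r₁ ≤ 0 := by rw [hr1]; linarith
  rcases le_total r₁ r₂ with hle | hle
  · rw [min_eq_left hle, max_eq_right hle, max_eq_right h10,
      max_eq_left (by linarith : (0:ℝ) ≤ -r₁)]
    rcases le_total r₂ 0 with h20 | h20
    · rw [max_eq_right h20, max_eq_left (by linarith : (0:ℝ) ≤ -r₂)]
      rw [min_eq_right (by linarith : ((c:ℝ) + 0 + 0)/2 ≤ (c:ℝ) + 0)]
      constructor <;> intro h <;> [skip; skip] <;>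
        · rw [hr1, hr2] at * ; linarith
    · rw [max_eq_left h20, max_eq_right (by linarith : -r₂ ≤ (0:ℝ))]
      have h2u : r₂ ≤ ((n:ℝ) - c)/2 := by rw [hr2]; linarith
      constructor
      · intro _
        rw [hr2] at h20; linarith
      · intro _
        refine le_min (by rw [hr1]; linarith) (by rw [hr1]; linarith)
  · rw [min_eq_right hle, max_eq_left hle, max_eq_right h10,
      max_eq_left (by linarith : (0:ℝ) ≤ -r₁),
      max_eq_right (by linarith : r₂ ≤ (0:ℝ)),
      max_eq_left (by linarith : (0:ℝ) ≤ -r₂),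
      min_eq_right (by linarith : ((c:ℝ) + 0 + 0)/2 ≤ (c:ℝ) + 0)]
    constructor <;> intro h <;> rw [hr1, hr2] at * <;> linarith
end

section
/- Let k = 2, α_1, α_2 > 0, α_1 + α_2 = 1, n > c ≥ 0. For λ_1 ∈ [α_1 n − (1+α_1)c, α_1(n−c)] (assuming this interval is nonempty and within [0, α_1(n−c)]), the maximal stable λ_2 equals (n − c)(1 − α_1/2) + c/2 − λ_1/2. Equivalently: (λ_1, λ_2) with λ_1 in this interval satisfies the coded stability condition min(c + r_1^+, (c + r_1^+ + r_2^+)/2) ≥ r_1^- + r_2^- (with r_i = α_i(n−c) − λ_i, reordered so r_1 ≤ r_2) if and only if λ_2 ≤ (n − c)(1 − α_1/2) + c/2 − λ_1/2. -/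
/-- Middle segment of the two-type coded capacity region boundary (Appendix B.2, case 2):
for `λ₁ ∈ [α₁n − (1+α₁)c, α₁(n−c)]` and `λ₂ ≥ 0`, the coded stability condition
(with `rᵢ = αᵢ(n−c) − λᵢ` relabeled increasingly) holds iff
`λ₂ ≤ (n−c)(1 − α₁/2) + c/2 − λ₁/2`. -/
theorem coded_boundary_middle_segment (α₁ α₂ : ℝ) (n c : ℕ)
    (hα₁ : 0 < α₁) (hα₂ : 0 < α₂) (hsum : α₁ + α₂ = 1)
    (hnc : c < n) (hfeas : 0 ≤ α₁ * n - (1 + α₁) * c)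
    (lam₁ lam₂ : ℝ)
    (h1l : α₁ * n - (1 + α₁) * c ≤ lam₁) (h1u : lam₁ ≤ α₁ * ((n : ℝ) - c))
    (h2 : 0 ≤ lam₂) :
    (let r₁ : ℝ := α₁ * ((n : ℝ) - c) - lam₁
     let r₂ : ℝ := α₂ * ((n : ℝ) - c) - lam₂
     let a : ℝ := min r₁ r₂
     let b : ℝ := max r₁ r₂
     min ((c : ℝ) + max a 0) (((c : ℝ) + max a 0 + max b 0) / 2)
       ≥ max (-a) 0 + max (-b) 0)
    ↔ lam₂ ≤ ((n : ℝ) - c) * (1 - α₁ / 2) + c / 2 - lam₁ / 2 := by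
  have hc : (0:ℝ) ≤ c := by positivity
  have hn : (c:ℝ) < n := by exact_mod_cast hnc
  have key : α₂ * ((n : ℝ) - c) = ((n : ℝ) - c) - α₁ * ((n : ℝ) - c) := by
    linear_combination ((n : ℝ) - c) * hsum
  simp only
  set r₁ : ℝ := α₁ * ((n : ℝ) - c) - lam₁ with hr1
  set r₂ : ℝ := α₂ * ((n : ℝ) - c) - lam₂ with hr2
  have hr₁0 : 0 ≤ r₁ := by simp only [hr1]; linarith
  have hr₁c : r₁ ≤ (c : ℝ) := by simp only [hr1]; nlinarith
  rcases le_or_gt 0 r₂ with h | h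
  · -- both nonneg: condition holds, and λ₂ is below the boundary
    have ha : 0 ≤ min r₁ r₂ := le_min hr₁0 h
    rw [max_eq_left ha, max_eq_left (le_trans ha (min_le_max)),
        max_eq_right (by linarith : -min r₁ r₂ ≤ 0),
        max_eq_right (by linarith [le_trans ha min_le_max] : -max r₁ r₂ ≤ 0)]
    constructor
    · intro _
      have : lam₂ ≤ α₂ * ((n : ℝ) - c) := by simp only [hr2] at h; linarith
      rw [key] at this
      linarith
    · intro _
      have hb : 0 ≤ max r₁ r₂ := le_trans ha min_le_max
      have h0 : (0:ℝ) + 0 = 0 := by ring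
      rw [ge_iff_le, h0]
      exact le_min (by linarith) (by linarith)
  · -- r₂ < 0 ≤ r₁
    have hmin : min r₁ r₂ = r₂ := min_eq_right (by linarith)
    have hmax : max r₁ r₂ = r₁ := max_eq_left (by linarith)
    rw [hmin, hmax, max_eq_right h.le, max_eq_left (by linarith : (0:ℝ) ≤ -r₂),
        max_eq_left hr₁0, max_eq_right (by linarith : -r₁ ≤ 0)]
    have hmin2 : min ((c:ℝ) + 0) (((c:ℝ) + 0 + r₁) / 2) = ((c:ℝ) + 0 + r₁) / 2 :=
      min_eq_right (by linarith)
    rw [hmin2]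
    constructor
    · intro hcond
      simp only [hr1, hr2] at hcond
      rw [key] at hcond
      linarith
    · intro hb
      simp only [hr1, hr2]
      rw [key]
      linarith
end
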